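/- arXiv:2012.02132 — 3 statements merged into one kernel-verified Lean document; each statement's English description precedes it below -/
import Mathlib

section
/- For every z ∈ U, the quadratic distance function of X satisfies ⟨X(z), X(z)⟩ = h(z)²·(T(z)²·|f'(z)|²/(4|g'(z)|²) + 1), where ⟨·,·⟩ is the Euclidean inner product on ℝ³. -/
/-- `⟨a,b⟩ := Re (a * conj b)` for complex numbers. -/
noncomputable def cinner (a b : ℂ) : ℝ := (a * (starRingEnd ℂ) b).re

/-- Euclidean inner product on `ℝ × ℝ × ℝ`. -/
def dot3 (v w : ℝ × ℝ × ℝ) : ℝ := v.1 * w.1 + v.2.1 * w.2.1 + v.2.2 * w.2.2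

/-!
Write `c = ⟨g', g f'⟩`. Then `X = h • (V / (2|g'|²) + N)` with `V = (Re A, Im A, -2c)`, and
`N` is a unit vector. The identity `⟨g' · conj f', g⟩ = ⟨g', g f'⟩ = c` gives `⟨A, g⟩ = c (1 - |g|²)`,
which makes `V ⟂ N`, and `|A|² = T² |g'|² |f'|² - 4c²` (using `T - |g|² = 1`), so
`|V|² = T² |g'|² |f'|²`. Pythagoras then yields the formula.
-/

open ComplexConjugate InnerProductSpace

theorem cinner_eq_inner (a b : ℂ) : cinner a b = ⟪a, b⟫_ℝ := by
  rw [real_inner_comm, Complex.inner]; rfl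

theorem inner_mul_conj_left (a b w : ℂ) : ⟪a * conj b, w⟫_ℝ = ⟪a, w * b⟫_ℝ := by
  simp only [Complex.inner, map_mul, Complex.conj_conj]
  ring_nf

theorem dot3_smul_add_smul_self_of_dot3_eq_zero {v w : ℝ × ℝ × ℝ} (hvw : dot3 v w = 0) (s t : ℝ) :
    dot3 (s • v + t • w) (s • v + t • w) = s ^ 2 * dot3 v v + t ^ 2 * dot3 w w := by
  simp only [dot3] at hvw ⊢
  simp only [Prod.fst_add, Prod.snd_add, Prod.smul_fst, Prod.smul_snd, smul_eq_mul]
  linear_combination 2 * s * t * hvw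

theorem dot3_mk_self (A : ℂ) (s : ℝ) : dot3 (A.re, A.im, s) (A.re, A.im, s) = ‖A‖ ^ 2 + s ^ 2 := by
  rw [dot3, Complex.sq_norm, Complex.normSq_apply]; ring

noncomputable def invStereographic (w : ℂ) : ℝ × ℝ × ℝ :=
  (2 * w.re / (1 + ‖w‖ ^ 2), 2 * w.im / (1 + ‖w‖ ^ 2), (1 - ‖w‖ ^ 2) / (1 + ‖w‖ ^ 2))

theorem dot3_invStereographic_self (w : ℂ) : dot3 (invStereographic w) (invStereographic w) = 1 := by
  have hT : 1 + ‖w‖ ^ 2 ≠ 0 := by positivity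
  rw [dot3, invStereographic]
  field_simp
  rw [Complex.sq_norm, Complex.normSq_apply]; ring

theorem dot3_mk_invStereographic (A w : ℂ) (s : ℝ) :
    dot3 (A.re, A.im, s) (invStereographic w) = (2 * ⟪A, w⟫_ℝ + s * (1 - ‖w‖ ^ 2)) / (1 + ‖w‖ ^ 2) := by
  rw [dot3, invStereographic, Complex.inner]
  simp only [Complex.mul_re, Complex.conj_re, Complex.conj_im]
  ring

-- At `w = g z`, `a = g' z`, `b = f' z` these are the paper's `A` and `(Re A, Im A, -2⟨g', g f'⟩)`.
noncomputable def tangentPart (w a b : ℂ) : ℂ :=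
  ((1 + ‖w‖ ^ 2 : ℝ) : ℂ) * a * conj b - 2 * w * ((cinner a (w * b) : ℝ) : ℂ)

noncomputable def tangentVector (w a b : ℂ) : ℝ × ℝ × ℝ :=
  ((tangentPart w a b).re, (tangentPart w a b).im, -2 * cinner a (w * b))

theorem tangentPart_eq_smul (w a b : ℂ) : tangentPart w a b =
    (1 + ‖w‖ ^ 2) • (a * conj b) - (2 * ⟪a, w * b⟫_ℝ) • w := by
  simp only [tangentPart, Complex.real_smul, cinner_eq_inner]
  push_cast; ring

theorem inner_tangentPart_left (w a b : ℂ) :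
    ⟪tangentPart w a b, w⟫_ℝ = ⟪a, w * b⟫_ℝ * (1 - ‖w‖ ^ 2) := by
  rw [tangentPart_eq_smul, inner_sub_left, real_inner_smul_left, real_inner_smul_left,
    inner_mul_conj_left, real_inner_self_eq_norm_sq]
  ring

theorem norm_tangentPart_sq (w a b : ℂ) :
    ‖tangentPart w a b‖ ^ 2 = (1 + ‖w‖ ^ 2) ^ 2 * ‖a‖ ^ 2 * ‖b‖ ^ 2 - 4 * ⟪a, w * b⟫_ℝ ^ 2 := by
  rw [tangentPart_eq_smul, norm_sub_sq_real, norm_smul, norm_smul, real_inner_smul_left,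
    real_inner_smul_right, inner_mul_conj_left, norm_mul, Complex.norm_conj, Real.norm_eq_abs,
    Real.norm_eq_abs]
  simp only [mul_pow, sq_abs]
  ring

theorem dot3_tangentVector_invStereographic (w a b : ℂ) :
    dot3 (tangentVector w a b) (invStereographic w) = 0 := by
  rw [tangentVector, dot3_mk_invStereographic, inner_tangentPart_left, cinner_eq_inner]
  ring

theorem dot3_tangentVector_self (w a b : ℂ) :
    dot3 (tangentVector w a b) (tangentVector w a b) = (1 + ‖w‖ ^ 2) ^ 2 * ‖a‖ ^ 2 * ‖b‖ ^ 2 := by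
  rw [tangentVector, dot3_mk_self, norm_tangentPart_sq, cinner_eq_inner]
  ring

theorem quadratic_distance_function_general
    (U : Set ℂ)
    (f' g g' : ℂ → ℂ)
    (hgne : ∀ z ∈ U, g' z ≠ 0)
    (T h : ℂ → ℝ)
    (hT : ∀ z, T z = 1 + ‖g z‖ ^ 2)
    (N : ℂ → ℝ × ℝ × ℝ)
    (hN : ∀ z, N z = (2 * (g z).re / T z, 2 * (g z).im / T z,
        (1 - ‖g z‖ ^ 2) / T z))
    (A : ℂ → ℂ)
    (hA : ∀ z, A z = (T z : ℂ) * g' z * (starRingEnd ℂ) (f' z)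
        - 2 * g z * ((cinner (g' z) (g z * f' z) : ℝ) : ℂ))
    (X : ℂ → ℝ × ℝ × ℝ)
    (hX : ∀ z, X z = (h z / (2 * ‖g' z‖ ^ 2)) •
          (((A z).re, (A z).im, -2 * cinner (g' z) (g z * f' z)) : ℝ × ℝ × ℝ)
        + h z • N z)
    : ∀ z ∈ U,
      dot3 (X z) (X z)
        = h z ^ 2 * (T z ^ 2 * ‖f' z‖ ^ 2 / (4 * ‖g' z‖ ^ 2) + 1) := by
  intro z hz
  have hXz : X z = (h z / (2 * ‖g' z‖ ^ 2)) • tangentVector (g z) (g' z) (f' z)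
      + h z • invStereographic (g z) := by
    rw [hX, hA, hN, hT]; rfl
  have hg' : ‖g' z‖ ≠ 0 := norm_ne_zero_iff.mpr (hgne z hz)
  rw [hXz, dot3_smul_add_smul_self_of_dot3_eq_zero (dot3_tangentVector_invStereographic _ _ _),
    dot3_tangentVector_self, dot3_invStereographic_self, hT]
  field_simp
  ring

/-- the quadratic distance function of `X`. -/
theorem quadratic_distance_function
    (U : Set ℂ) (hU : IsOpen U)
    (f f' g g' : ℂ → ℂ)
    (hf : ∀ z ∈ U, HasDerivAt f (f' z) z)
    (hg : ∀ z ∈ U, HasDerivAt g (g' z) z)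
    (hgne : ∀ z ∈ U, g' z ≠ 0)
    (T h : ℂ → ℝ)
    (hT : ∀ z, T z = 1 + ‖g z‖ ^ 2)
    (hh : ∀ z, h z = Real.exp (f z).re)
    (N : ℂ → ℝ × ℝ × ℝ)
    (hN : ∀ z, N z = (2 * (g z).re / T z, 2 * (g z).im / T z,
        (1 - ‖g z‖ ^ 2) / T z))
    (A : ℂ → ℂ)
    (hA : ∀ z, A z = (T z : ℂ) * g' z * (starRingEnd ℂ) (f' z)
        - 2 * g z * ((cinner (g' z) (g z * f' z) : ℝ) : ℂ))
    (X : ℂ → ℝ × ℝ × ℝ)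
    (hX : ∀ z, X z = (h z / (2 * ‖g' z‖ ^ 2)) •
          (((A z).re, (A z).im, -2 * cinner (g' z) (g z * f' z)) : ℝ × ℝ × ℝ)
        + h z • N z)
    : ∀ z ∈ U,
      dot3 (X z) (X z)
        = h z ^ 2 * (T z ^ 2 * ‖f' z‖ ^ 2 / (4 * ‖g' z‖ ^ 2) + 1) :=
  quadratic_distance_function_general U f' g g' hgne T h hT N hN A hA X hX
end

section
/- Let a, b, c ∈ ℝ and take f(z) = a·z + (b + i·c) and g(z) = exp(z). Then the SS-surface parametrization X is a surface of revolution about the third coordinate axis: for all u₁, u₂ ∈ ℝ, X(u₁ + i·u₂) = (M(u₁)·cos u₂, M(u₁)·sin u₂, Ñ(u₁)), where M(u₁) = e^{a·u₁ + b}·(a·(1 − e^{2u₁})·e^{−u₁}/2 + 2e^{u₁}/(1 + e^{2u₁})) and Ñ(u₁) = e^{a·u₁ + b}·((1 − e^{2u₁})/(1 + e^{2u₁}) − a). -/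
open ComplexConjugate

/-- The point `X z` of the SS-surface in terms of the values `h z`, `g z`, `g' z`, `f' z`. -/
noncomputable def ssPoint (H : ℝ) (G G' F' : ℂ) : ℝ × ℝ × ℝ :=
  let T : ℝ := 1 + ‖G‖ ^ 2
  let κ : ℝ := cinner G' (G * F')
  let A : ℂ := (T : ℂ) * G' * conj F' - 2 * G * (κ : ℂ)
  (H / (2 * ‖G'‖ ^ 2)) • (A.re, A.im, -2 * κ) +
    H • (2 * G.re / T, 2 * G.im / T, (1 - ‖G‖ ^ 2) / T)

theorem cinner_self_mul_ofReal (w : ℂ) (r : ℝ) : cinner w (w * r) = r * ‖w‖ ^ 2 := by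
  rw [cinner, map_mul, Complex.conj_ofReal, ← mul_assoc, Complex.mul_conj,
    Complex.normSq_eq_norm_sq, ← Complex.ofReal_mul, Complex.ofReal_re, mul_comm]

theorem ssPoint_self_ofReal (H a : ℝ) {w : ℂ} (hw : w ≠ 0) :
    ssPoint H w w a =
      (H * (a * (1 - ‖w‖ ^ 2) / (2 * ‖w‖ ^ 2) + 2 / (1 + ‖w‖ ^ 2)) * w.re,
        H * (a * (1 - ‖w‖ ^ 2) / (2 * ‖w‖ ^ 2) + 2 / (1 + ‖w‖ ^ 2)) * w.im,
        H * ((1 - ‖w‖ ^ 2) / (1 + ‖w‖ ^ 2) - a)) := by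
  have hA : ((1 + ‖w‖ ^ 2 : ℝ) : ℂ) * w * conj (a : ℂ) - 2 * w * ((cinner w (w * a) : ℝ) : ℂ)
      = ((a * (1 - ‖w‖ ^ 2) : ℝ) : ℂ) * w := by
    rw [cinner_self_mul_ofReal, Complex.conj_ofReal]; push_cast; ring
  have hn : ‖w‖ ≠ 0 := norm_ne_zero_iff.mpr hw
  simp only [ssPoint]
  rw [hA, cinner_self_mul_ofReal]
  simp only [Complex.re_ofReal_mul, Complex.im_ofReal_mul, Prod.smul_mk, smul_eq_mul,
    Prod.mk_add_mk, Prod.mk.injEq]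
  exact ⟨by field_simp, by field_simp, by field_simp; ring⟩

/-- for `f z = a·z + (b + i·c)` and `g = exp`, the SS-surface `X` is a
surface of revolution about the third axis, with profile functions `M`, `Ñ`. -/
theorem rotational_ss_surface (a b c : ℝ)
    (f f' g g' : ℂ → ℂ)
    (hf : ∀ z, f z = (a : ℂ) * z + ((b : ℂ) + Complex.I * (c : ℂ)))
    (hf' : ∀ z, f' z = (a : ℂ))
    (hg : ∀ z, g z = Complex.exp z)
    (hg' : ∀ z, g' z = Complex.exp z)
    (T h : ℂ → ℝ)
    (hT : ∀ z, T z = 1 + ‖g z‖ ^ 2)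
    (hh : ∀ z, h z = Real.exp (f z).re)
    (N : ℂ → ℝ × ℝ × ℝ)
    (hN : ∀ z, N z = (2 * (g z).re / T z, 2 * (g z).im / T z,
        (1 - ‖g z‖ ^ 2) / T z))
    (A : ℂ → ℂ)
    (hA : ∀ z, A z = (T z : ℂ) * g' z * (starRingEnd ℂ) (f' z)
        - 2 * g z * ((cinner (g' z) (g z * f' z) : ℝ) : ℂ))
    (X : ℂ → ℝ × ℝ × ℝ)
    (hX : ∀ z, X z = (h z / (2 * ‖g' z‖ ^ 2)) •
          (((A z).re, (A z).im, -2 * cinner (g' z) (g z * f' z)) : ℝ × ℝ × ℝ)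
        + h z • N z)
    (M Nt : ℝ → ℝ)
    (hM : ∀ u, M u = Real.exp (a * u + b)
        * (a * (1 - Real.exp (2 * u)) * Real.exp (-u) / 2
            + 2 * Real.exp u / (1 + Real.exp (2 * u))))
    (hNt : ∀ u, Nt u = Real.exp (a * u + b)
        * ((1 - Real.exp (2 * u)) / (1 + Real.exp (2 * u)) - a)) :
    ∀ u₁ u₂ : ℝ,
      X ((u₁ : ℂ) + Complex.I * (u₂ : ℂ))
        = (M u₁ * Real.cos u₂, M u₁ * Real.sin u₂, Nt u₁) := by
  intro u₁ u₂
  set z : ℂ := u₁ + Complex.I * u₂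
  have hXz : X z = ssPoint (h z) (Complex.exp z) (Complex.exp z) a := by
    simp only [hX, hA, hN, hT, hg, hg', hf', ssPoint]
  have hhz : h z = Real.exp (a * u₁ + b) := by simp [hh, hf, z]
  have hre : z.re = u₁ := by simp [z]
  have him : z.im = u₂ := by simp [z]
  have hsq : Real.exp (2 * u₁) = Real.exp u₁ ^ 2 := by rw [sq, ← Real.exp_add, two_mul]
  have hρ : Real.exp u₁ ≠ 0 := Real.exp_ne_zero u₁
  rw [hXz, ssPoint_self_ofReal _ _ (Complex.exp_ne_zero z), hhz, Complex.norm_exp,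
    Complex.exp_re, Complex.exp_im, hre, him, hM, hNt, Real.exp_neg, hsq]
  refine Prod.ext ?_ (Prod.ext ?_ ?_) <;> field_simp
end

section
/- Let U ⊆ ℂ be a nonempty connected open set and f : ℂ → ℂ holomorphic on U. If the real part of f is independent of the second coordinate, i.e. ∂₂(Re f)(z) = 0 for all z ∈ U, then there exists a real constant a ∈ ℝ such that f'(z) = a for all z ∈ U; consequently Re f(u₁ + i·u₂) = a·u₁ + b for some constant b ∈ ℝ. -/
/-! By Cauchy–Riemann, `∂₂ (Re f) = -Im f'`, so `f'` is a real-valued holomorphic function on `U`.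
By the open mapping theorem it is constant, equal to some `a : ℝ`, and then `f z - a z` has zero
derivative on the connected set `U`, hence is constant. -/

open Complex

theorem fderiv_re_comp_apply_I {f : ℂ → ℂ} {z : ℂ} (hf : DifferentiableAt ℂ f z) :
    fderiv ℝ (fun w => (f w).re) z I = -(deriv f z).im := by
  have h : HasFDerivAt (fun w => (f w).re)
      (reCLM.comp ((fderiv ℂ f z).restrictScalars ℝ)) z :=
    reCLM.hasFDerivAt.comp z (hf.hasFDerivAt.restrictScalars ℝ)
  rw [h.fderiv, ← toSpanSingleton_deriv]
  simp

theorem AnalyticOnNhd.exists_eq_ofReal_of_forall_im_eq_zero {g : ℂ → ℂ} {U : Set ℂ}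
    (hg : AnalyticOnNhd ℂ g U) (hU : IsOpen U) (hconn : IsPreconnected U)
    (him : ∀ z ∈ U, (g z).im = 0) : ∃ a : ℝ, ∀ z ∈ U, g z = a := by
  rcases U.eq_empty_or_nonempty with rfl | ⟨z₀, hz₀⟩
  · simp
  rcases hg.is_constant_or_isOpen hconn with ⟨w, hw⟩ | hopen
  · refine ⟨w.re, fun z hz => Complex.ext (by simp [hw z hz]) ?_⟩
    simpa [← hw z hz, hw z₀ hz₀] using him z₀ hz₀
  · have hsub : g '' U ⊆ interior (im ⁻¹' {0}) :=
      (hopen U subset_rfl hU).subset_interior_iff.2 (Set.image_subset_iff.2 him)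
    rw [interior_preimage_im, interior_singleton, Set.preimage_empty] at hsub
    exact absurd (hsub ⟨z₀, hz₀, rfl⟩) id

theorem re_independent_of_u2_implies_affine_general (U : Set ℂ) (hU : IsOpen U)
    (hconn : IsConnected U)
    (f : ℂ → ℂ) (hf : DifferentiableOn ℂ f U)
    (hRe : ∀ z ∈ U, fderiv ℝ (fun w => (f w).re) z Complex.I = 0) :
    ∃ a : ℝ, (∀ z ∈ U, deriv f z = (a : ℂ)) ∧
      ∃ b : ℝ, ∀ z ∈ U, (f z).re = a * z.re + b := by
  have him : ∀ z ∈ U, (deriv f z).im = 0 := fun z hz => by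
    simpa [fderiv_re_comp_apply_I (hf.differentiableAt (hU.mem_nhds hz))] using hRe z hz
  obtain ⟨a, ha⟩ := (hf.analyticOnNhd hU).deriv.exists_eq_ofReal_of_forall_im_eq_zero hU
    hconn.isPreconnected him
  refine ⟨a, ha, ?_⟩
  obtain ⟨c, hc⟩ := hU.exists_eq_add_of_deriv_eq hconn.isPreconnected hf
    (g := fun z => (a : ℂ) * z) (by fun_prop) fun z hz => by simp [ha z hz]
  exact ⟨c.re, fun z hz => by simp [hc hz]⟩

/-- if `f` is holomorphic on a nonempty connected open set `U ⊆ ℂ` and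
`Re f` is independent of the second coordinate (`∂₂(Re f) = 0` on `U`), then `f'` is a
real constant `a` on `U`, and `Re f(u₁ + i·u₂) = a·u₁ + b` for some constant `b`. -/
theorem re_independent_of_u2_implies_affine (U : Set ℂ) (hU : IsOpen U)
    (hne : U.Nonempty) (hconn : IsConnected U)
    (f : ℂ → ℂ) (hf : DifferentiableOn ℂ f U)
    (hRe : ∀ z ∈ U, fderiv ℝ (fun w => (f w).re) z Complex.I = 0) :
    ∃ a : ℝ, (∀ z ∈ U, deriv f z = (a : ℂ)) ∧
      ∃ b : ℝ, ∀ z ∈ U, (f z).re = a * z.re + b :=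
  re_independent_of_u2_implies_affine_general U hU hconn f hf hRe
end
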